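/- Let n ≥ 1, pmax, Pagr : ℝ with n * pmax > Pagr, and let p : ℕ → Fin n → ℝ be a sequence of profiles with p 0 i ∈ [pmin, pmax] and p (k+1) i = p k i + (pmax - p k i) * δ k i, where δ k i ∈ [ε, 1] for a fixed ε ∈ (0, 1]. Then ∑ i, p k i → n * pmax is bounded below by n * pmax - (1-ε)^k * (n * pmax - ∑ i, p 0 i); in particular there exists K such that ∑ i, p K i ≥ Pagr. -/
import Mathlib


theorem alg1_loop_terminates
    (n : ℕ) (hn : 1 ≤ n) (pmin pmax Pagr : ℝ)
    (hex : (n : ℝ) * pmax > Pagr)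
    (ε : ℝ) (hε0 : 0 < ε) (hε1 : ε ≤ 1)
    (p : ℕ → Fin n → ℝ) (δ : ℕ → Fin n → ℝ)
    (hp0 : ∀ i, pmin ≤ p 0 i ∧ p 0 i ≤ pmax)
    (hδ : ∀ k i, ε ≤ δ k i ∧ δ k i ≤ 1)
    (hrec : ∀ k i, p (k + 1) i = p k i + (pmax - p k i) * δ k i) :
    (∀ k, ∑ i, p k i ≥
      (n : ℝ) * pmax - (1 - ε) ^ k * ((n : ℝ) * pmax - ∑ i, p 0 i)) ∧
    ∃ K, ∑ i, p K i ≥ Pagr := by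
  have key : ∀ k i, 0 ≤ pmax - p k i ∧
      pmax - p k i ≤ (1 - ε) ^ k * (pmax - p 0 i) := by
    intro k
    induction k with
    | zero =>
      intro i
      constructor
      · linarith [(hp0 i).2]
      · simp
    | succ k ih =>
      intro i
      have h1 : pmax - p (k + 1) i = (pmax - p k i) * (1 - δ k i) := by
        rw [hrec k i]; ring
      have hδi := hδ k i
      have h2 : 0 ≤ 1 - δ k i := by linarith [hδi.2]
      have h3 : 1 - δ k i ≤ 1 - ε := by linarith [hδi.1]
      have hih := ih i
      constructor
      · rw [h1]; exact mul_nonneg hih.1 h2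
      · rw [h1, pow_succ]
        calc (pmax - p k i) * (1 - δ k i) ≤ (pmax - p k i) * (1 - ε) :=
              mul_le_mul_of_nonneg_left h3 hih.1
          _ ≤ (1 - ε) ^ k * (pmax - p 0 i) * (1 - ε) := by
              apply mul_le_mul_of_nonneg_right hih.2; linarith
          _ = (1 - ε) ^ k * (1 - ε) * (pmax - p 0 i) := by ring
  have main : ∀ k, ∑ i, p k i ≥
      (n : ℝ) * pmax - (1 - ε) ^ k * ((n : ℝ) * pmax - ∑ i, p 0 i) := by
    intro k
    have hsum : ∑ i, (pmax - p k i) ≤ ∑ i, (1 - ε) ^ k * (pmax - p 0 i) :=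
      Finset.sum_le_sum fun i _ => (key k i).2
    simp only [Finset.sum_sub_distrib, Finset.sum_const, Finset.card_univ,
      Fintype.card_fin, nsmul_eq_mul, ← Finset.mul_sum, mul_sub] at hsum
    linarith
  refine ⟨main, ?_⟩
  have hC : 0 ≤ (n : ℝ) * pmax - ∑ i, p 0 i := by
    have : ∑ i, p 0 i ≤ ∑ i : Fin n, pmax :=
      Finset.sum_le_sum fun i _ => (hp0 i).2
    simp only [Finset.sum_const, Finset.card_univ, Fintype.card_fin,
      nsmul_eq_mul] at this
    linarith
  have habs : |1 - ε| < 1 := by rw [abs_lt]; constructor <;> linarith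
  have htend : Filter.Tendsto (fun k => (1 - ε) ^ k *
      ((n : ℝ) * pmax - ∑ i, p 0 i)) Filter.atTop (nhds 0) := by
    have := tendsto_pow_atTop_nhds_zero_of_abs_lt_one habs
    simpa using this.mul_const ((n : ℝ) * pmax - ∑ i, p 0 i)
  have hlt : ∀ᶠ k in Filter.atTop, (1 - ε) ^ k *
      ((n : ℝ) * pmax - ∑ i, p 0 i) < (n : ℝ) * pmax - Pagr := by
    have := htend.eventually_lt_const (by linarith : (0:ℝ) < (n : ℝ) * pmax - Pagr)
    exact this
  obtain ⟨K, hK⟩ := hlt.exists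
  exact ⟨K, by linarith [main K]⟩
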